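/- Let S=(1,s_2,s_3,...) be a packing sequence and S'=(1,s_2',s_3',...) a packing sequence such that for every i ≥ 2, s_i' ∈ {2⌈(s_i+1)/2⌉ − 1, s_i} (i.e., s_i' = s_i if s_i is odd, and s_i' ∈ {s_i, s_i+1} if s_i is even). Then χ_{S'}(P_n) = χ_S(P_n) for every positive integer n. -/

import Mathlib

open SimpleGraph

/-- `IsSPackingColoring G s φ` : `φ` is an `S`-packing coloring of `G` with colors
`Fin k`, where the value `s i` represents the entry `s_{i+1}` of the packing
sequence `S = (s_1, s_2, …)` (0-indexed encoding), and the color `j : Fin k`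
represents color `j+1`: two distinct vertices sharing a color `i` (1-indexed)
must be at distance greater than `s_i`. -/
def IsSPackingColoring {V : Type*} (G : SimpleGraph V) (s : ℕ → ℕ) {k : ℕ}
    (φ : V → Fin k) : Prop :=
  ∀ u v : V, u ≠ v → φ u = φ v → (s (φ u) : ℕ∞) < G.edist u v

/-- The `S`-packing chromatic number of `G`: the least `k` admitting an
`S`-packing `k`-coloring. -/
noncomputable def SPackingChromatic {V : Type*} (G : SimpleGraph V) (s : ℕ → ℕ) : ℕ :=
  sInf {k | ∃ φ : V → Fin k, IsSPackingColoring G s φ}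

/-- `G` is `χ_S`-critical: every proper subgraph has a strictly smaller
`S`-packing chromatic number. -/
def SCritical {V : Type*} (G : SimpleGraph V) (s : ℕ → ℕ) : Prop :=
  ∀ H : G.Subgraph, H ≠ ⊤ → SPackingChromatic H.coe s < SPackingChromatic G s

/-- `G` is `χ_S`-vertex-critical: deleting any vertex strictly decreases the
`S`-packing chromatic number. -/
def SVertexCritical {V : Type*} (G : SimpleGraph V) (s : ℕ → ℕ) : Prop :=
  ∀ v : V, SPackingChromatic (G.induce {u | u ≠ v}) s < SPackingChromatic G s

/-!
Since `s'_i ≥ s_i`, every `S'`-packing coloring is an `S`-packing coloring. Conversely, an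
`S`-packing coloring of `P_n` can be rearranged so that color `1` occupies exactly the even
positions, while the other colored vertices, read from left to right, fill the odd positions.
Color `1` never takes two consecutive vertices, so two vertices of color `i ≥ 2` at distance
`d > s_i` have at least `⌈d/2⌉` vertices of colors `≥ 2` between them (counting one endpoint);
after the rearrangement their distance is even and at least `d`. Finally, an even number
exceeds `s_i` if and only if it exceeds `s'_i`, which is at most `s_i` rounded up to an odd number.
-/

open Finset

lemma pathGraph_sub_le_walk_length {n : ℕ} {u v : Fin n} (p : (pathGraph n).Walk u v) :
    (v : ℕ) - u ≤ p.length := by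
  induction p with
  | nil => simp
  | cons h _ ih =>
    rw [pathGraph_adj] at h
    rw [Walk.length_cons]
    omega

lemma pathGraph_edist_le {n : ℕ} (d : ℕ) :
    ∀ {u v : Fin n}, (u : ℕ) + d = v → (pathGraph n).edist u v ≤ d := by
  induction d with
  | zero =>
    intro u v h
    rw [Fin.ext (by omega : (u : ℕ) = v), edist_self]
    simp
  | succ d ih =>
    intro u v h
    let w : Fin n := ⟨u + 1, by omega⟩
    calc (pathGraph n).edist u v
        ≤ (pathGraph n).edist u w + (pathGraph n).edist w v := SimpleGraph.edist_triangle
      _ ≤ 1 + d := add_le_add (edist_eq_one_iff_adj.2 (pathGraph_adj.2 (.inl rfl))).le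
          (ih (by simp only [w]; omega))
      _ = (d + 1 : ℕ) := by push_cast; ring

lemma pathGraph_edist_of_le {n : ℕ} {u v : Fin n} (h : u ≤ v) :
    (pathGraph n).edist u v = ((v : ℕ) - u : ℕ) := by
  refine le_antisymm (pathGraph_edist_le _ (by rw [Fin.le_def] at h; omega)) ?_
  rw [edist_eq_sInf]
  exact le_sInf fun _ ⟨p, hp⟩ => hp ▸ Nat.cast_le.2 (pathGraph_sub_le_walk_length p)

lemma isSPackingColoring_pathGraph_iff {n k : ℕ} {s : ℕ → ℕ} {φ : Fin n → Fin k} :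
    IsSPackingColoring (pathGraph n) s φ ↔
      ∀ u v : Fin n, u < v → φ u = φ v → s (φ u) < (v : ℕ) - u := by
  constructor
  · intro h u v huv heq
    have := h u v huv.ne heq
    rwa [pathGraph_edist_of_le huv.le, Nat.cast_lt] at this
  · intro h u v hne heq
    rcases hne.lt_or_gt with huv | hvu
    · rw [pathGraph_edist_of_le huv.le, Nat.cast_lt]
      exact h u v huv heq
    · rw [edist_comm, pathGraph_edist_of_le hvu.le, Nat.cast_lt, heq]
      exact h v u hvu heq.symm

section Chromatic

variable {V : Type*} {G : SimpleGraph V} {s s' : ℕ → ℕ} {k : ℕ} {φ : V → Fin k}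

lemma IsSPackingColoring.mono (hφ : IsSPackingColoring G s' φ) (h : ∀ i, s i ≤ s' i) :
    IsSPackingColoring G s φ :=
  fun u v hne heq => (Nat.cast_le.2 (h _)).trans_lt (hφ u v hne heq)

lemma isSPackingColoring_of_injective (hφ : Function.Injective φ) : IsSPackingColoring G s φ :=
  fun _ _ hne heq => absurd (hφ heq) hne

lemma sPackingChromatic_le (hφ : IsSPackingColoring G s φ) : SPackingChromatic G s ≤ k :=
  Nat.sInf_le ⟨φ, hφ⟩

lemma exists_isSPackingColoring_sPackingChromatic [Finite V] (G : SimpleGraph V) (s : ℕ → ℕ) :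
    ∃ φ : V → Fin (SPackingChromatic G s), IsSPackingColoring G s φ := by
  have : {k | ∃ φ : V → Fin k, IsSPackingColoring G s φ}.Nonempty :=
    ⟨Nat.card V, Finite.equivFin V, isSPackingColoring_of_injective (Finite.equivFin V).injective⟩
  exact Nat.sInf_mem this

end Chromatic

lemma card_le_of_subset_Ico_of_no_consecutive {S : Finset ℕ} {b m : ℕ}
    (hS : S ⊆ Ico b (b + m)) (hsep : ∀ x ∈ S, ∀ y ∈ S, x + 1 ≠ y) : #S ≤ (m + 1) / 2 := by
  calc #S ≤ #(range ((m + 1) / 2)) := card_le_card_of_injOn (fun x => (x - b) / 2) ?_ ?_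
    _ = (m + 1) / 2 := card_range _
  · intro x hx
    have := mem_Ico.1 (hS hx)
    simp only [coe_range, Set.mem_Iio]
    omega
  · intro x hx y hy hxy
    have := mem_Ico.1 (hS hx)
    have := mem_Ico.1 (hS hy)
    have := hsep x hx y hy
    have := hsep y hy x hx
    simp only at hxy
    omega

lemma Finset.card_inter_Ico_orderEmbOfFin {α : Type*} [LinearOrder α] [LocallyFiniteOrder α]
    (A : Finset α) (t t' : Fin #A) :
    #(A ∩ Ico (A.orderEmbOfFin rfl t) (A.orderEmbOfFin rfl t')) = t' - t := by
  rw [← Fin.card_Ico, ← card_map (A.orderEmbOfFin rfl).toEmbedding]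
  congr 1
  ext x
  simp only [mem_inter, mem_Ico, mem_map, RelEmbedding.coe_toEmbedding]
  constructor
  · rintro ⟨hx, hlo, hhi⟩
    obtain ⟨r, rfl⟩ : x ∈ Set.range (A.orderEmbOfFin rfl) := by
      rwa [range_orderEmbOfFin]
    simp only [OrderEmbedding.le_iff_le, OrderEmbedding.lt_iff_lt] at hlo hhi
    exact ⟨r, ⟨hlo, hhi⟩, rfl⟩
  · rintro ⟨r, hr, rfl⟩
    simp only [OrderEmbedding.le_iff_le, OrderEmbedding.lt_iff_lt]
    exact ⟨orderEmbOfFin_mem A rfl r, hr⟩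

section PathColoring

variable {n k : ℕ} {s s' : ℕ → ℕ} {φ : Fin n → Fin k}

lemma card_le_of_forall_color_eq_zero (hs : 1 ≤ s 0)
    (hφ : IsSPackingColoring (pathGraph n) s φ) {Z : Finset (Fin n)} {b m : ℕ}
    (hZ : ∀ j ∈ Z, (φ j : ℕ) = 0 ∧ b ≤ j ∧ (j : ℕ) < b + m) : #Z ≤ (m + 1) / 2 := by
  rw [← card_image_of_injective Z Fin.val_injective]
  refine card_le_of_subset_Ico_of_no_consecutive (b := b) ?_ ?_
  · intro x hx
    obtain ⟨j, hj, rfl⟩ := mem_image.1 hx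
    have := hZ j hj
    exact mem_Ico.2 ⟨this.2.1, this.2.2⟩
  · rintro _ hx _ hy h
    obtain ⟨u, hu, rfl⟩ := mem_image.1 hx
    obtain ⟨v, hv, rfl⟩ := mem_image.1 hy
    have hfar := isSPackingColoring_pathGraph_iff.1 hφ u v (Fin.lt_def.2 (by omega))
      (Fin.ext (by rw [(hZ u hu).1, (hZ v hv).1]))
    rw [(hZ u hu).1] at hfar
    omega

lemma sub_le_two_mul_card_inter_Ico (hs : 1 ≤ s 0) (hφ : IsSPackingColoring (pathGraph n) s φ)
    {p q : Fin n} (hp : (φ p : ℕ) ≠ 0) :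
    (q : ℕ) - p ≤ 2 * #(univ.filter (fun j : Fin n => (φ j : ℕ) ≠ 0) ∩ Ico p q) := by
  set A := univ.filter (fun j : Fin n => (φ j : ℕ) ≠ 0) with hA
  have hzero : #(Ico p q \ A) ≤ ((q : ℕ) - p - 1 + 1) / 2 := by
    refine card_le_of_forall_color_eq_zero hs hφ (b := p + 1) fun j hj => ?_
    simp only [hA, mem_sdiff, mem_Ico, mem_filter, mem_univ, true_and, not_not] at hj
    have hjp : j ≠ p := fun h => hp (h ▸ hj.2)
    rw [Fin.le_def, Fin.lt_def] at hj
    rw [Ne, Fin.ext_iff] at hjp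
    omega
  have := card_sdiff_add_card_inter (Ico p q) A
  rw [Fin.card_Ico, inter_comm] at this
  omega

/-- Normal form: color `0` on exactly the even positions, and the nonzero colors of `φ`,
in their order along the path, on the odd positions. -/
lemma exists_isSPackingColoring_pathGraph_mod_two (h1 : s 0 = 1)
    (hφ : IsSPackingColoring (pathGraph n) s φ) :
    ∃ ψ : Fin n → Fin k, IsSPackingColoring (pathGraph n) s ψ ∧
      ∀ u v, ψ u = ψ v → (u : ℕ) % 2 = v % 2 := by
  set A : Finset (Fin n) := univ.filter (fun j : Fin n => (φ j : ℕ) ≠ 0)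
  set e := A.orderEmbOfFin rfl
  have hA : n / 2 ≤ #A := by
    have hzero := card_le_of_forall_color_eq_zero h1.ge hφ
      (Z := univ.filter (fun j => (φ j : ℕ) = 0)) (b := 0) (m := n)
      fun j hj => ⟨(mem_filter.1 hj).2, Nat.zero_le _, by simp⟩
    have := card_filter_add_card_filter_not (s := univ) (p := fun j : Fin n => (φ j : ℕ) = 0)
    rw [card_univ, Fintype.card_fin] at this
    change _ + #A = n at this
    omega
  have he : ∀ t, (φ (e t) : ℕ) ≠ 0 := fun t => (mem_filter.1 (orderEmbOfFin_mem A rfl t)).2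
  let ψ : Fin n → Fin k := fun v =>
    if h : (v : ℕ) % 2 = 0 then ⟨0, (φ v).pos⟩ else φ (e ⟨v / 2, by omega⟩)
  have hψ0 : ∀ v, (ψ v : ℕ) = 0 ↔ (v : ℕ) % 2 = 0 := by
    intro v
    by_cases hv : (v : ℕ) % 2 = 0
    · simp [ψ, hv]
    · simp only [ψ, hv, dite_false, iff_false]
      exact he _
  have hpar : ∀ u v, ψ u = ψ v → (u : ℕ) % 2 = v % 2 := by
    intro u v h
    have := hψ0 u
    rw [h, hψ0 v] at this
    omega
  refine ⟨ψ, isSPackingColoring_pathGraph_iff.2 fun u v huv heq => ?_, hpar⟩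
  have huv' := hpar u v heq
  rw [Fin.lt_def] at huv
  by_cases hu : (u : ℕ) % 2 = 0
  · rw [(hψ0 u).2 hu, h1]
    omega
  · have hv : ¬ (v : ℕ) % 2 = 0 := by omega
    let t : Fin #A := ⟨u / 2, by omega⟩
    let t' : Fin #A := ⟨v / 2, by omega⟩
    have htt : t < t' := Fin.lt_def.2 (by simp only [t, t']; omega)
    have hu' : ψ u = φ (e t) := dif_neg hu
    have hv' : ψ v = φ (e t') := dif_neg hv
    rw [hu', hv'] at heq
    have hfar := isSPackingColoring_pathGraph_iff.1 hφ (e t) (e t')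
      (e.strictMono htt) heq
    have hwin := sub_le_two_mul_card_inter_Ico h1.ge hφ (he t) (q := e t')
    rw [card_inter_Ico_orderEmbOfFin] at hwin
    have ht : (t : ℕ) = u / 2 := rfl
    have ht' : (t' : ℕ) = v / 2 := rfl
    rw [hu']
    omega

/-- Same-colored vertices are at even distance, and an even number exceeds `s i` exactly when it
exceeds `2 * (s i / 2) + 1`. -/
lemma IsSPackingColoring.of_mod_two (hφ : IsSPackingColoring (pathGraph n) s φ)
    (hpar : ∀ u v, φ u = φ v → (u : ℕ) % 2 = v % 2) (hs : ∀ i, s' i / 2 ≤ s i / 2) :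
    IsSPackingColoring (pathGraph n) s' φ := by
  rw [isSPackingColoring_pathGraph_iff] at hφ ⊢
  intro u v huv heq
  have := hφ u v huv heq
  have := hpar u v heq
  have := hs (φ u)
  rw [Fin.lt_def] at huv
  omega

end PathColoring

theorem stmt4_general (s s' : ℕ → ℕ)
    (h1 : s 0 = 1)
    (h1' : s' 0 = 1)
    (hrel : ∀ i, 1 ≤ i → s' i = 2 * ((s i + 1 + 1) / 2) - 1 ∨ s' i = s i)
    (n : ℕ) :
    SPackingChromatic (pathGraph n) s' = SPackingChromatic (pathGraph n) s := by
  have hle : ∀ i, s i ≤ s' i ∧ s' i / 2 ≤ s i / 2 := by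
    intro i
    rcases Nat.eq_zero_or_pos i with rfl | hi
    · omega
    · rcases hrel i hi with h | h <;> omega
  apply le_antisymm
  · obtain ⟨φ, hφ⟩ := exists_isSPackingColoring_sPackingChromatic (pathGraph n) s
    obtain ⟨ψ, hψ, hpar⟩ := exists_isSPackingColoring_pathGraph_mod_two h1 hφ
    exact sPackingChromatic_le (hψ.of_mod_two hpar fun i => (hle i).2)
  · obtain ⟨φ, hφ⟩ := exists_isSPackingColoring_sPackingChromatic (pathGraph n) s'
    exact sPackingChromatic_le (hφ.mono fun i => (hle i).1)

theorem stmt4 (s s' : ℕ → ℕ) (hmono : Monotone s) (hpos : ∀ i, 1 ≤ s i)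
    (h1 : s 0 = 1)
    (hmono' : Monotone s') (hpos' : ∀ i, 1 ≤ s' i) (h1' : s' 0 = 1)
    (hrel : ∀ i, 1 ≤ i → s' i = 2 * ((s i + 1 + 1) / 2) - 1 ∨ s' i = s i)
    (n : ℕ) (hn : 1 ≤ n) :
    SPackingChromatic (pathGraph n) s' = SPackingChromatic (pathGraph n) s :=
  stmt4_general s s' h1 h1' hrel n
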